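/- arXiv:2507.03712 — 3 statements merged into one kernel-verified Lean document; each statement's English description precedes it below -/
import Mathlib

section
/- Suppose y, Y : [0,T] → ℝⁿ and z, Z : [0,T] → ℝᵐ are differentiable with ẏ(t) = f(y(t), z(t)), g(y(t), z(t)) = 0 for all t, and φ^{(y)} : [0,T] → ℝⁿ, φ^{(z)} : [0,T] → ℝᵐ satisfy the adjoint DAE -φ̇^{(y)} = f̄_yᵀ φ^{(y)} + ḡ_yᵀ φ^{(z)} + ψ^y and 0 = f̄_zᵀ φ^{(y)} + ḡ_zᵀ φ^{(z)} + ψ^z on [0,T), where f̄_y, f̄_z, ḡ_y, ḡ_z are the averaged Jacobians along the segment between (y(t),z(t)) and (Y(t),Z(t)). Then with e^{(y)} = y - Y and e^{(z)} = z - Z, ∫₀ᵀ (e^{(y)}, ψ^y) dt + ∫₀ᵀ (e^{(z)}, ψ^z) dt = (φ^{(y)}(0), e^{(y)}(0)) - (φ^{(y)}(T), e^{(y)}(T)) + ∫₀ᵀ (φ^{(y)}, f(Y,Z) - Ẏ) dt + ∫₀ᵀ (φ^{(z)}, g(Y,Z)) dt. -/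
/-!
Differentiate the pairing `(φ^y, e^y)`. The averaged Jacobians make the mean value identities
`f(y,z) - f(Y,Z) = f̄_y e^y + f̄_z e^z` and `g(y,z) - g(Y,Z) = ḡ_y e^y + ḡ_z e^z` exact, so the
adjoint DAE turns this derivative into `(φ^y, f(Y,Z) - Ẏ) + (φ^z, g(Y,Z)) - (e^y, ψ^y) - (e^z, ψ^z)`;
the identity follows by integrating over `[0,T]`.
-/

open Matrix MeasureTheory

/-- The averaged Jacobian matrix `∫₀¹ DF(s) (c s) ds`. -/
noncomputable def avgJac {p q : ℕ} (F : ℝ → (Fin p → ℝ) → (Fin q → ℝ))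
    (c : ℝ → Fin p → ℝ) : Matrix (Fin q) (Fin p) ℝ :=
  LinearMap.toMatrix'
    ((∫ s in (0:ℝ)..1, fderiv ℝ (F s) (c s)).toLinearMap)

theorem HasDerivAt.dotProduct {ι : Type*} [Fintype ι] {u v : ℝ → ι → ℝ} {u' v' : ι → ℝ}
    {t : ℝ} (hu : HasDerivAt u u' t) (hv : HasDerivAt v v' t) :
    HasDerivAt (fun t => u t ⬝ᵥ v t) (u' ⬝ᵥ v t + u t ⬝ᵥ v') t := by
  simp only [_root_.dotProduct]
  rw [← Finset.sum_add_distrib]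
  exact HasDerivAt.fun_sum fun i _ => (hasDerivAt_pi.mp hu i).mul (hasDerivAt_pi.mp hv i)

section Calculus

variable {E F G : Type*} [NormedAddCommGroup E] [NormedSpace ℝ E] [NormedAddCommGroup F]
  [NormedSpace ℝ F] [NormedAddCommGroup G] [NormedSpace ℝ G]

theorem fderiv_comp_prodMk_left {f : E × F → G} {x : E} {w : F}
    (hf : DifferentiableAt ℝ f (x, w)) :
    fderiv ℝ (fun v => f (v, w)) x = fderiv ℝ f (x, w) ∘L .inl ℝ E F :=
  (hf.hasFDerivAt.comp x (hasFDerivAt_prodMk_left x w)).fderiv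

theorem fderiv_comp_prodMk_right {f : E × F → G} {x : E} {w : F}
    (hf : DifferentiableAt ℝ f (x, w)) :
    fderiv ℝ (fun v => f (x, v)) w = fderiv ℝ f (x, w) ∘L .inr ℝ E F :=
  (hf.hasFDerivAt.comp w (hasFDerivAt_prodMk_right x w)).fderiv

theorem integral_fderiv_segment [CompleteSpace G] {f : E → G} (hf : ContDiff ℝ 1 f) (x X : E) :
    ∫ s in (0:ℝ)..1, fderiv ℝ f (s • x + (1 - s) • X) (x - X) = f x - f X := by
  have hderiv (s : ℝ) : HasDerivAt (fun s : ℝ => s • x + (1 - s) • X) (x - X) s := by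
    simpa [sub_eq_add_neg] using
      ((hasDerivAt_id s).smul_const x).fun_add (((hasDerivAt_id s).const_sub 1).smul_const X)
  have hcont : Continuous fun s : ℝ => fderiv ℝ f (s • x + (1 - s) • X) (x - X) := by
    have := hf.continuous_fderiv one_ne_zero
    fun_prop
  rw [intervalIntegral.integral_eq_sub_of_hasDerivAt
    (fun s _ => ((hf.differentiable one_ne_zero _).hasFDerivAt.comp_hasDerivAt s (hderiv s)))
    (hcont.intervalIntegrable 0 1)]
  simp

end Calculus

theorem avgJac_mulVec {p q : ℕ} (F : ℝ → (Fin p → ℝ) → (Fin q → ℝ)) (c : ℝ → Fin p → ℝ)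
    (v : Fin p → ℝ) :
    avgJac F c *ᵥ v = (∫ s in (0:ℝ)..1, fderiv ℝ (F s) (c s)) v := by
  rw [avgJac, ← Matrix.toLin'_apply, Matrix.toLin'_toMatrix']
  rfl

theorem avgJac_mulVec_add_avgJac_mulVec {p r q : ℕ}
    {f : (Fin p → ℝ) × (Fin r → ℝ) → (Fin q → ℝ)} (hf : ContDiff ℝ 1 f)
    (a A : Fin p → ℝ) (b B : Fin r → ℝ) :
    avgJac (fun s y' => f (y', s • b + (1 - s) • B)) (fun s => s • a + (1 - s) • A) *ᵥ (a - A)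
      + avgJac (fun s z' => f (s • a + (1 - s) • A, z')) (fun s => s • b + (1 - s) • B) *ᵥ (b - B)
    = f (a, b) - f (A, B) := by
  have hdf := hf.differentiable one_ne_zero
  have hDf := hf.continuous_fderiv one_ne_zero
  simp only [avgJac_mulVec, fderiv_comp_prodMk_left (hdf _), fderiv_comp_prodMk_right (hdf _)]
  rw [ContinuousLinearMap.intervalIntegral_apply ?_, ContinuousLinearMap.intervalIntegral_apply ?_,
    ← intervalIntegral.integral_add ?_ ?_]
  · simp only [ContinuousLinearMap.comp_apply, ContinuousLinearMap.inl_apply,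
      ContinuousLinearMap.inr_apply, ← map_add, Prod.mk_add_mk, add_zero, zero_add]
    simpa only [Prod.smul_mk, Prod.mk_add_mk, Prod.mk_sub_mk] using
      integral_fderiv_segment hf (a, b) (A, B)
  all_goals exact Continuous.intervalIntegrable (by fun_prop) 0 1

theorem hasDerivAt_dotProduct_sub_of_adjoint {ι κ : Type*} [Fintype ι] [Fintype κ]
    {f : (ι → ℝ) × (κ → ℝ) → ι → ℝ} {g : (ι → ℝ) × (κ → ℝ) → κ → ℝ}
    {Fy : Matrix ι ι ℝ} {Fz : Matrix ι κ ℝ} {Gy : Matrix κ ι ℝ} {Gz : Matrix κ κ ℝ}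
    {y Y φy : ℝ → ι → ℝ} {Y' ψy : ι → ℝ} {z Z φz ψz : κ → ℝ} {t : ℝ}
    (hF : Fy *ᵥ (y t - Y t) + Fz *ᵥ (z - Z) = f (y t, z) - f (Y t, Z))
    (hG : Gy *ᵥ (y t - Y t) + Gz *ᵥ (z - Z) = g (y t, z) - g (Y t, Z))
    (hy : HasDerivAt y (f (y t, z)) t) (hcon : g (y t, z) = 0) (hY : HasDerivAt Y Y' t)
    (hφy : HasDerivAt φy (-(Fyᵀ *ᵥ φy t + Gyᵀ *ᵥ φz + ψy)) t)
    (hφz : Fzᵀ *ᵥ φy t + Gzᵀ *ᵥ φz + ψz = 0) :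
    HasDerivAt (fun t => φy t ⬝ᵥ (y t - Y t))
      (φy t ⬝ᵥ (f (Y t, Z) - Y') + φz ⬝ᵥ g (Y t, Z)
        - (y t - Y t) ⬝ᵥ ψy - (z - Z) ⬝ᵥ ψz) t := by
  refine (hφy.dotProduct (hy.sub hY)).congr_deriv ?_
  have hF' := congrArg (φy t ⬝ᵥ ·) hF
  have hG' := congrArg (φz ⬝ᵥ ·) hG
  have hz := congrArg (· ⬝ᵥ (z - Z)) hφz
  simp only [hcon, Pi.sub_apply, dotProduct_add, dotProduct_sub, add_dotProduct, sub_dotProduct, neg_dotProduct,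
    zero_dotProduct, dotProduct_zero, mulVec_transpose, dotProduct_mulVec, mulVec_sub,
    dotProduct_comm ψy, dotProduct_comm ψz] at hF' hG' hz ⊢
  linarith

/-- Adjoint error identity (Lemma `adj_error`) for a semi-explicit DAE. -/
theorem adjoint_dae_error_identity {n m : ℕ} (T : ℝ) (hT : 0 < T)
    (f : (Fin n → ℝ) × (Fin m → ℝ) → (Fin n → ℝ))
    (g : (Fin n → ℝ) × (Fin m → ℝ) → (Fin m → ℝ))
    (hf : ContDiff ℝ 1 f) (hg : ContDiff ℝ 1 g)
    (y Y Y' ψy φy : ℝ → Fin n → ℝ) (z Z ψz φz : ℝ → Fin m → ℝ)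
    (fby : ℝ → Matrix (Fin n) (Fin n) ℝ) (fbz : ℝ → Matrix (Fin n) (Fin m) ℝ)
    (gby : ℝ → Matrix (Fin m) (Fin n) ℝ) (gbz : ℝ → Matrix (Fin m) (Fin m) ℝ)
    -- the averaged Jacobians along the segment between (y,z) and (Y,Z)
    (hfby : ∀ t, fby t = avgJac (fun s y' => f (y', s • z t + (1 - s) • Z t))
      (fun s => s • y t + (1 - s) • Y t))
    (hfbz : ∀ t, fbz t = avgJac (fun s z' => f (s • y t + (1 - s) • Y t, z'))
      (fun s => s • z t + (1 - s) • Z t))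
    (hgby : ∀ t, gby t = avgJac (fun s y' => g (y', s • z t + (1 - s) • Z t))
      (fun s => s • y t + (1 - s) • Y t))
    (hgbz : ∀ t, gbz t = avgJac (fun s z' => g (s • y t + (1 - s) • Y t, z'))
      (fun s => s • z t + (1 - s) • Z t))
    -- the true solution of the DAE
    (hy : ∀ t ∈ Set.Icc (0:ℝ) T, HasDerivAt y (f (y t, z t)) t)
    (hcon : ∀ t ∈ Set.Icc (0:ℝ) T, g (y t, z t) = 0)
    -- the approximate solution and its derivative
    (hY : ∀ t ∈ Set.Icc (0:ℝ) T, HasDerivAt Y (Y' t) t)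
    -- the adjoint DAE
    (hadj1 : ∀ t ∈ Set.Ico (0:ℝ) T,
      HasDerivAt φy (-((fby t)ᵀ *ᵥ φy t + (gby t)ᵀ *ᵥ φz t + ψy t)) t)
    (hadj2 : ∀ t ∈ Set.Ico (0:ℝ) T,
      (fbz t)ᵀ *ᵥ φy t + (gbz t)ᵀ *ᵥ φz t + ψz t = 0)
    -- sufficient smoothness for the integrals and integration by parts
    (hyc : Continuous y) (hYc : Continuous Y) (hY'c : Continuous Y')
    (hzc : Continuous z) (hZc : Continuous Z)
    (hψyc : Continuous ψy) (hψzc : Continuous ψz)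
    (hφyc : Continuous φy) (hφzc : Continuous φz) :
    (∫ t in (0:ℝ)..T, (y t - Y t) ⬝ᵥ ψy t)
      + (∫ t in (0:ℝ)..T, (z t - Z t) ⬝ᵥ ψz t)
    = φy 0 ⬝ᵥ (y 0 - Y 0) - φy T ⬝ᵥ (y T - Y T)
      + (∫ t in (0:ℝ)..T, φy t ⬝ᵥ (f (Y t, Z t) - Y' t))
      + (∫ t in (0:ℝ)..T, φz t ⬝ᵥ g (Y t, Z t)) := by
  have hderiv (t : ℝ) (ht : t ∈ Set.Ioo 0 T) :=
    have hIcc := Set.Ioo_subset_Icc_self ht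
    have hIco := Set.Ioo_subset_Ico_self ht
    hasDerivAt_dotProduct_sub_of_adjoint
      (by rw [hfby, hfbz]; exact avgJac_mulVec_add_avgJac_mulVec hf ..)
      (by rw [hgby, hgbz]; exact avgJac_mulVec_add_avgJac_mulVec hg ..)
      (hy t hIcc) (hcon t hIcc) (hY t hIcc) (hadj1 t hIco) (hadj2 t hIco)
  have hfc := hf.continuous
  have hgc := hg.continuous
  have hFTC := intervalIntegral.integral_eq_sub_of_hasDeriv_right_of_le hT.le
    (Continuous.continuousOn (by fun_prop)) (fun t ht => (hderiv t ht).hasDerivWithinAt)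
    (Continuous.intervalIntegrable (by fun_prop) 0 T)
  rw [intervalIntegral.integral_sub, intervalIntegral.integral_sub, intervalIntegral.integral_add]
    at hFTC
  · linarith
  all_goals exact Continuous.intervalIntegrable (by fun_prop) 0 T
end

section
/- In the Hessenberg index-2 setting, with P = I - f̄_z (ḡ_y f̄_z)⁻¹ ḡ_y, for any ζ^z ∈ ℝᵐ and fixed t: (-Pᵀ f̄_yᵀ ḡ_yᵀ (f̄_zᵀ ḡ_yᵀ)⁻¹ ζ^z, e^{(y)}) = -(ḡ_yᵀ (f̄_zᵀ ḡ_yᵀ)⁻¹ ζ^z, f(y,z)) + (ḡ_yᵀ (f̄_zᵀ ḡ_yᵀ)⁻¹ ζ^z, f(Y,Z)) + (ζ^z, e^{(z)}) - ((f̄_zᵀ ḡ_yᵀ)⁻¹ f̄_zᵀ f̄_yᵀ ḡ_yᵀ (f̄_zᵀ ḡ_yᵀ)⁻¹ ζ^z, g(Y)). -/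
open Matrix

/-- Technical lemma (2) in the Hessenberg index-2 setting. -/
theorem tech_lemma_two {n m : ℕ}
    (fy : Matrix (Fin n) (Fin n) ℝ)
    (fz : Matrix (Fin n) (Fin m) ℝ) (gy : Matrix (Fin m) (Fin n) ℝ)
    (hinv : IsUnit (gy * fz))
    (ey : Fin n → ℝ) (ez : Fin m → ℝ)
    (fyz fYZ : Fin n → ℝ) (gY : Fin m → ℝ)
    -- averaged Jacobian identities at the fixed time t
    (hlinf : fy *ᵥ ey + fz *ᵥ ez = fyz - fYZ)
    (hling : gy *ᵥ ey = -gY)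
    (ζz : Fin m → ℝ) :
    (-((1 - fz * (gy * fz)⁻¹ * gy)ᵀ *ᵥ
        (fyᵀ *ᵥ (gyᵀ *ᵥ ((fzᵀ * gyᵀ)⁻¹ *ᵥ ζz))))) ⬝ᵥ ey
      = -((gyᵀ *ᵥ ((fzᵀ * gyᵀ)⁻¹ *ᵥ ζz)) ⬝ᵥ fyz)
        + (gyᵀ *ᵥ ((fzᵀ * gyᵀ)⁻¹ *ᵥ ζz)) ⬝ᵥ fYZ
        + ζz ⬝ᵥ ez
        - ((fzᵀ * gyᵀ)⁻¹ *ᵥ (fzᵀ *ᵥ (fyᵀ *ᵥ (gyᵀ *ᵥ ((fzᵀ * gyᵀ)⁻¹ *ᵥ ζz))))) ⬝ᵥ gY := by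
  have hdet : IsUnit (gy * fz).det := (isUnit_iff_isUnit_det _).mp hinv
  have hAT : fzᵀ * gyᵀ = (gy * fz)ᵀ := (transpose_mul gy fz).symm
  have hdetT : IsUnit ((gy * fz)ᵀ).det := by rwa [det_transpose]
  set v : Fin m → ℝ := (fzᵀ * gyᵀ)⁻¹ *ᵥ ζz with hv
  set w : Fin n → ℝ := gyᵀ *ᵥ v with hw
  -- fzᵀ *ᵥ w = ζz
  have hfzw : fzᵀ *ᵥ w = ζz := by
    rw [hw, hv, mulVec_mulVec, hAT, mulVec_mulVec,
      mul_nonsing_inv _ hdetT, one_mulVec]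
  -- transpose of inverse
  have hTinv : (fzᵀ * gyᵀ)⁻¹ = ((gy * fz)⁻¹)ᵀ := by
    rw [hAT, transpose_nonsing_inv]
  -- P *ᵥ ey
  have hPey : (1 - fz * (gy * fz)⁻¹ * gy) *ᵥ ey
      = ey + fz *ᵥ ((gy * fz)⁻¹ *ᵥ gY) := by
    rw [sub_mulVec, one_mulVec, ← mulVec_mulVec, ← mulVec_mulVec, hling,
      mulVec_neg, mulVec_neg, sub_neg_eq_add]
  -- fy *ᵥ ey
  have hfyey : fy *ᵥ ey = fyz - fYZ - fz *ᵥ ez := by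
    rw [← hlinf]; abel
  -- main LHS rewrite
  have hLHS : (-((1 - fz * (gy * fz)⁻¹ * gy)ᵀ *ᵥ (fyᵀ *ᵥ w))) ⬝ᵥ ey
      = -((fyᵀ *ᵥ w) ⬝ᵥ ((1 - fz * (gy * fz)⁻¹ * gy) *ᵥ ey)) := by
    rw [neg_dotProduct, mulVec_transpose, ← dotProduct_mulVec]
  -- last term of RHS
  have hlast : ((fzᵀ * gyᵀ)⁻¹ *ᵥ (fzᵀ *ᵥ (fyᵀ *ᵥ w))) ⬝ᵥ gY
      = (fyᵀ *ᵥ w) ⬝ᵥ (fz *ᵥ ((gy * fz)⁻¹ *ᵥ gY)) := by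
    rw [hTinv, mulVec_transpose, mulVec_transpose,
      dotProduct_mulVec, dotProduct_mulVec]
  have h1 : (fyᵀ *ᵥ w) ⬝ᵥ ey = w ⬝ᵥ (fy *ᵥ ey) := by
    rw [mulVec_transpose, ← dotProduct_mulVec]
  rw [hLHS, hPey, dotProduct_add, h1, hfyey, ← hlast]
  have h2 : w ⬝ᵥ (fz *ᵥ ez) = ζz ⬝ᵥ ez := by
    rw [dotProduct_mulVec, ← mulVec_transpose, hfzw]
  rw [dotProduct_sub, dotProduct_sub, h2]
  ring
end

section
/- Let D_c, D_a > 0, D_eff = 2 D_c D_a / (D_c + D_a), and define c(x,t) = a(x,t) = 2 + e^{-π² D_eff t} cos(πx) and w(x,t) = ((D_a - D_c)/(D_a + D_c)) · (-π e^{-π² D_eff t} sin(πx)) / (2 + e^{-π² D_eff t} cos(πx)). Then on [0,1] × (0,∞): (i) ∂c/∂t = D_c (∂²c/∂x² + ∂/∂x(c·w)), (ii) ∂a/∂t = D_a (∂²a/∂x² - ∂/∂x(a·w)), (iii) c - a = 0, and (iv) the no-flux boundary conditions c_x + c w = 0 and a_x - a w = 0 hold at x = 0 and x = 1. -/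
open Real

/-- Effective diffusion coefficient. -/
noncomputable def Deff (Dc Da : ℝ) : ℝ := 2 * Dc * Da / (Dc + Da)

/-- Exact cation concentration for the electro-neutral Nernst–Planck system. -/
noncomputable def cSol (Dc Da x t : ℝ) : ℝ :=
  2 + Real.exp (-π ^ 2 * Deff Dc Da * t) * Real.cos (π * x)

/-- Exact anion concentration (equal to the cation concentration). -/
noncomputable def aSol (Dc Da x t : ℝ) : ℝ :=
  2 + Real.exp (-π ^ 2 * Deff Dc Da * t) * Real.cos (π * x)

/-- Exact electric potential gradient. -/
noncomputable def wSol (Dc Da x t : ℝ) : ℝ :=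
  ((Da - Dc) / (Da + Dc)) *
    (-π * Real.exp (-π ^ 2 * Deff Dc Da * t) * Real.sin (π * x)) /
    (2 + Real.exp (-π ^ 2 * Deff Dc Da * t) * Real.cos (π * x))

/-!
The profile `c = 2 + E(t) cos(πx)`, `E(t) = exp(-π² D_eff t)`, stays positive for `t ≥ 0`, so
`c w = k · (-π E sin(πx))` with `k = (D_a - D_c)/(D_a + D_c)`. Hence `c_xx = -π² E cos(πx)`,
`(c w)_x = k c_xx` and `c_t = D_eff c_xx`, and both transport equations reduce to
`D_c (1 + k) = D_eff = D_a (1 - k)`. The no-flux conditions hold because `sin(πx)` vanishes at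
the integers, so `c_x = 0` and `w = 0` there.
-/

theorem aSol_eq_cSol : aSol = cSol := rfl

theorem Deff_nonneg {Dc Da : ℝ} (hDc : 0 ≤ Dc) (hDa : 0 ≤ Da) : 0 ≤ Deff Dc Da := by
  unfold Deff; positivity

theorem mul_one_add_div_eq_Deff {Dc Da : ℝ} (h : Da + Dc ≠ 0) :
    Dc * (1 + (Da - Dc) / (Da + Dc)) = Deff Dc Da := by
  unfold Deff
  rw [add_comm Dc Da]
  field_simp
  ring

theorem mul_one_sub_div_eq_Deff {Dc Da : ℝ} (h : Da + Dc ≠ 0) :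
    Da * (1 - (Da - Dc) / (Da + Dc)) = Deff Dc Da := by
  unfold Deff
  rw [add_comm Dc Da]
  field_simp
  ring

section cSol

variable (Dc Da : ℝ)

theorem cSol_pos {x t : ℝ} (ht : 0 ≤ Deff Dc Da * t) : 0 < cSol Dc Da x t := by
  have hexp : Real.exp (-π ^ 2 * Deff Dc Da * t) ≤ 1 :=
    Real.exp_le_one_iff.mpr (by nlinarith [sq_nonneg π])
  have hcos : -Real.exp (-π ^ 2 * Deff Dc Da * t)
      ≤ Real.exp (-π ^ 2 * Deff Dc Da * t) * Real.cos (π * x) := by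
    nlinarith [Real.neg_one_le_cos (π * x), Real.exp_pos (-π ^ 2 * Deff Dc Da * t)]
  unfold cSol
  linarith

theorem hasDerivAt_cSol_space (x t : ℝ) :
    HasDerivAt (fun ξ => cSol Dc Da ξ t)
      (-π * Real.exp (-π ^ 2 * Deff Dc Da * t) * Real.sin (π * x)) x :=
  ((((hasDerivAt_id' x).const_mul π).cos.const_mul
    (Real.exp (-π ^ 2 * Deff Dc Da * t))).const_add 2).congr_deriv (by ring)

theorem deriv_cSol_space (x t : ℝ) :
    deriv (fun ξ => cSol Dc Da ξ t) x
      = -π * Real.exp (-π ^ 2 * Deff Dc Da * t) * Real.sin (π * x) :=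
  (hasDerivAt_cSol_space Dc Da x t).deriv

theorem deriv_const_mul_sin_pi_mul (A x : ℝ) :
    deriv (fun ξ => A * Real.sin (π * ξ)) x = π * A * Real.cos (π * x) :=
  ((((hasDerivAt_id' x).const_mul π).sin.const_mul A).congr_deriv (by ring)).deriv

theorem deriv_deriv_cSol_space (x t : ℝ) :
    deriv (fun ξ => deriv (fun ξ' => cSol Dc Da ξ' t) ξ) x
      = -π ^ 2 * Real.exp (-π ^ 2 * Deff Dc Da * t) * Real.cos (π * x) := by
  simp only [deriv_cSol_space]
  rw [deriv_const_mul_sin_pi_mul]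
  ring

theorem deriv_cSol_time (x t : ℝ) :
    deriv (fun τ => cSol Dc Da x τ) t
      = -π ^ 2 * Deff Dc Da * Real.exp (-π ^ 2 * Deff Dc Da * t) * Real.cos (π * x) :=
  (((((hasDerivAt_id' t).const_mul (-π ^ 2 * Deff Dc Da)).exp.mul_const
    (Real.cos (π * x))).const_add 2).congr_deriv (by ring)).deriv

theorem cSol_mul_wSol {x t : ℝ} (hc : cSol Dc Da x t ≠ 0) :
    cSol Dc Da x t * wSol Dc Da x t
      = (Da - Dc) / (Da + Dc) * (-π * Real.exp (-π ^ 2 * Deff Dc Da * t) * Real.sin (π * x)) :=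
  mul_div_cancel₀ _ hc

theorem deriv_cSol_mul_wSol {t : ℝ} (ht : 0 ≤ Deff Dc Da * t) (x : ℝ) :
    deriv (fun ξ => cSol Dc Da ξ t * wSol Dc Da ξ t) x
      = (Da - Dc) / (Da + Dc) * (-π ^ 2 * Real.exp (-π ^ 2 * Deff Dc Da * t) * Real.cos (π * x)) := by
  have hcw : (fun ξ => cSol Dc Da ξ t * wSol Dc Da ξ t)
      = fun ξ => (Da - Dc) / (Da + Dc) * (-π * Real.exp (-π ^ 2 * Deff Dc Da * t))
          * Real.sin (π * ξ) := by
    funext ξ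
    rw [cSol_mul_wSol Dc Da (cSol_pos Dc Da ht).ne']
    ring
  rw [hcw, deriv_const_mul_sin_pi_mul]
  ring

theorem deriv_cSol_space_intCast (n : ℤ) (t : ℝ) :
    deriv (fun ξ => cSol Dc Da ξ t) n = 0 := by
  rw [deriv_cSol_space, mul_comm π, Real.sin_int_mul_pi, mul_zero]

theorem wSol_intCast (n : ℤ) (t : ℝ) : wSol Dc Da n t = 0 := by
  rw [wSol, mul_comm π (n : ℝ), Real.sin_int_mul_pi, mul_zero, mul_zero, zero_div]

end cSol

/-- The stated functions solve the electro-neutral Nernst–Planck system on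
`[0,1] × (0,∞)`, together with the electro-neutrality constraint and no-flux
boundary conditions. -/
theorem ennpe_exact_solution (Dc Da : ℝ) (hDc : 0 < Dc) (hDa : 0 < Da) :
    (∀ x ∈ Set.Icc (0:ℝ) 1, ∀ t ∈ Set.Ioi (0:ℝ),
      -- (i) cation transport equation
      deriv (fun τ => cSol Dc Da x τ) t
        = Dc * (deriv (fun ξ => deriv (fun ξ' => cSol Dc Da ξ' t) ξ) x
            + deriv (fun ξ => cSol Dc Da ξ t * wSol Dc Da ξ t) x)) ∧
    (∀ x ∈ Set.Icc (0:ℝ) 1, ∀ t ∈ Set.Ioi (0:ℝ),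
      -- (ii) anion transport equation
      deriv (fun τ => aSol Dc Da x τ) t
        = Da * (deriv (fun ξ => deriv (fun ξ' => aSol Dc Da ξ' t) ξ) x
            - deriv (fun ξ => aSol Dc Da ξ t * wSol Dc Da ξ t) x)) ∧
    (∀ x ∈ Set.Icc (0:ℝ) 1, ∀ t ∈ Set.Ioi (0:ℝ),
      -- (iii) electro-neutrality
      cSol Dc Da x t - aSol Dc Da x t = 0) ∧
    (∀ t ∈ Set.Ioi (0:ℝ),
      -- (iv) no-flux boundary conditions at x = 0 and x = 1
      deriv (fun ξ => cSol Dc Da ξ t) 0 + cSol Dc Da 0 t * wSol Dc Da 0 t = 0 ∧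
      deriv (fun ξ => cSol Dc Da ξ t) 1 + cSol Dc Da 1 t * wSol Dc Da 1 t = 0 ∧
      deriv (fun ξ => aSol Dc Da ξ t) 0 - aSol Dc Da 0 t * wSol Dc Da 0 t = 0 ∧
      deriv (fun ξ => aSol Dc Da ξ t) 1 - aSol Dc Da 1 t * wSol Dc Da 1 t = 0) := by
  have hsum : Da + Dc ≠ 0 := by positivity
  have hDt {t : ℝ} (ht : t ∈ Set.Ioi (0:ℝ)) : 0 ≤ Deff Dc Da * t :=
    mul_nonneg (Deff_nonneg hDc.le hDa.le) (le_of_lt ht)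
  have hboundary (n : ℤ) (t : ℝ) :
      deriv (fun ξ => cSol Dc Da ξ t) n = 0 ∧ wSol Dc Da n t = 0 :=
    ⟨deriv_cSol_space_intCast Dc Da n t, wSol_intCast Dc Da n t⟩
  rw [aSol_eq_cSol]
  refine ⟨fun x _ t ht => ?_, fun x _ t ht => ?_, fun _ _ _ _ => sub_self _, fun t _ => ?_⟩
  · rw [deriv_cSol_time, deriv_deriv_cSol_space, deriv_cSol_mul_wSol Dc Da (hDt ht)]
    linear_combination (π ^ 2 * Real.exp (-π ^ 2 * Deff Dc Da * t) * Real.cos (π * x))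
      * mul_one_add_div_eq_Deff hsum
  · rw [deriv_cSol_time, deriv_deriv_cSol_space, deriv_cSol_mul_wSol Dc Da (hDt ht)]
    linear_combination (π ^ 2 * Real.exp (-π ^ 2 * Deff Dc Da * t) * Real.cos (π * x))
      * mul_one_sub_div_eq_Deff hsum
  · obtain ⟨hc₀, hw₀⟩ := hboundary 0 t
    obtain ⟨hc₁, hw₁⟩ := hboundary 1 t
    push_cast at hc₀ hw₀ hc₁ hw₁
    simp only [hc₀, hw₀, hc₁, hw₁, mul_zero, add_zero, sub_zero, and_self]
end
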